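/- Let X be Hausdorff and E ⊆ C(X) with the pointwise topology. If φ has two fixed points z₁ ≠ z₂ such that δ_{z₁}, δ_{z₂} are linearly independent on E, then the weighted composition operator W f = w·(f∘φ) is not τ_p-supercyclic on E. -/

import Mathlib

/-!
Evaluation at the two fixed points maps `E` continuously and, by the linear independence of
`δ_{z₁}, δ_{z₂}`, onto `ℂ²`, so it would carry a dense projective orbit of `W` to a dense subset
of `ℂ²`. But `δ_{zᵢ}(c Wⁿ f) = c · w(zᵢ)ⁿ · f(zᵢ)`, and all such points `(c aⁿ α, c bⁿ β)` lie in a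
proper closed cone: if `|a| ≤ |b|` then `|β| |x| ≤ |α| |y|` on all of them.
-/

/-- The evaluation functional at `x` on a subspace `E` of functions on `X`. -/
noncomputable def evalFunctional {X : Type*} (E : Submodule ℂ (X → ℂ)) (x : X) :
    ↥E →ₗ[ℂ] ℂ :=
  (LinearMap.proj x).comp E.subtype

/-- The weighted composition map `f ↦ w · (f ∘ φ)` on functions on `X`. -/
def weightedComp {X : Type*} (w : X → ℂ) (φ : X → X) : (X → ℂ) → (X → ℂ) :=
  fun f x => w x * f (φ x)

theorem LinearMap.prod_surjective_of_linearIndependent {K M : Type*} [Field K]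
    [AddCommGroup M] [Module K M] {f g : M →ₗ[K] K} (hfg : LinearIndependent K ![f, g]) :
    Function.Surjective (f.prod g) := by
  rw [← LinearMap.range_eq_top]
  by_contra hne
  obtain ⟨ψ, hψ, hker⟩ := Submodule.exists_le_ker_of_lt_top _ (lt_top_iff_ne_top.2 hne)
  have hψ_apply (x y : K) : ψ (x, y) = x * ψ (1, 0) + y * ψ (0, 1) := by
    rw [← smul_eq_mul, ← smul_eq_mul, ← map_smul, ← map_smul, ← map_add]
    simp
  have hcomb : ψ (1, 0) • f + ψ (0, 1) • g = 0 := by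
    ext x
    have : ψ (f x, g x) = 0 := hker ⟨x, rfl⟩
    rw [hψ_apply] at this
    simpa [mul_comm] using this
  obtain ⟨h₁, h₂⟩ := LinearIndependent.pair_iff.1 hfg _ _ hcomb
  exact hψ (LinearMap.ext fun ⟨x, y⟩ => by rw [hψ_apply, h₁, h₂]; simp)

lemma weightedComp_iterate_apply_of_isFixedPt {X : Type*} (w : X → ℂ) {φ : X → X} {z : X}
    (hz : φ.IsFixedPt z) (g : X → ℂ) (n : ℕ) :
    (weightedComp w φ)^[n] g z = w z ^ n * g z := by
  induction n with
  | zero => simp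
  | succ n ih =>
    rw [Function.iterate_succ_apply', weightedComp]
    simp only [hz.eq, ih, pow_succ]
    ring

lemma continuous_evalFunctional {X : Type*} (E : Submodule ℂ (X → ℂ)) (x : X) :
    Continuous (evalFunctional E x) :=
  (continuous_apply x).comp continuous_subtype_val

lemma not_dense_of_subset_isClosed {α : Type*} [TopologicalSpace α] {s C : Set α} {x : α}
    (hsC : s ⊆ C) (hC : IsClosed C) (hx : x ∉ C) : ¬ Dense s :=
  fun hs => hx (closure_minimal hsC hC (hs x))

section

variable {𝕜 : Type*} [NormedField 𝕜]

lemma not_dense_setOf_geometric_of_norm_le {a b : 𝕜} (hab : ‖a‖ ≤ ‖b‖) (α β : 𝕜) :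
    ¬ Dense {p : 𝕜 × 𝕜 | ∃ (c : 𝕜) (n : ℕ), p = (c * a ^ n * α, c * b ^ n * β)} := by
  rcases eq_or_ne β 0 with rfl | hβ
  · refine not_dense_of_subset_isClosed (C := {p | p.2 = 0}) (x := (0, 1)) ?_
      (isClosed_eq continuous_snd continuous_const) (by simp)
    rintro _ ⟨c, n, rfl⟩
    simp
  · refine not_dense_of_subset_isClosed (C := {p | ‖β‖ * ‖p.1‖ ≤ ‖α‖ * ‖p.2‖}) (x := (1, 0)) ?_
      (isClosed_le (by fun_prop) (by fun_prop)) (by simpa using hβ)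
    rintro _ ⟨c, n, rfl⟩
    simp only [Set.mem_ofPred_eq, norm_mul, norm_pow]
    calc ‖β‖ * (‖c‖ * ‖a‖ ^ n * ‖α‖) ≤ ‖β‖ * (‖c‖ * ‖b‖ ^ n * ‖α‖) := by gcongr
      _ = ‖α‖ * (‖c‖ * ‖b‖ ^ n * ‖β‖) := by ring

lemma not_dense_setOf_geometric (a b α β : 𝕜) :
    ¬ Dense {p : 𝕜 × 𝕜 | ∃ (c : 𝕜) (n : ℕ), p = (c * a ^ n * α, c * b ^ n * β)} := by
  rcases le_total ‖a‖ ‖b‖ with hab | hba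
  · exact not_dense_setOf_geometric_of_norm_le hab α β
  · intro hd
    refine not_dense_setOf_geometric_of_norm_le hba β α ?_
    convert Prod.swap_surjective.denseRange.dense_image continuous_swap hd using 1
    ext ⟨x, y⟩
    simp [eq_comm]

end

theorem not_taup_supercyclic_of_two_fixed_points_general
    (X : Type*)
    (E : Submodule ℂ (X → ℂ))
    (w : X → ℂ) (φ : X → X)
    (z₁ z₂ : X) (hfix₁ : φ z₁ = z₁) (hfix₂ : φ z₂ = z₂)
    (hindep : LinearIndependent ℂ ![evalFunctional E z₁, evalFunctional E z₂]) :
    ¬ ∃ f : ↥E, Dense {g : ↥E | ∃ (c : ℂ) (n : ℕ),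
      (g : X → ℂ) = c • (weightedComp w φ)^[n] (f : X → ℂ)} := by
  rintro ⟨f, hf⟩
  have hπ : Continuous ((evalFunctional E z₁).prod (evalFunctional E z₂)) :=
    (continuous_evalFunctional E z₁).prodMk (continuous_evalFunctional E z₂)
  refine not_dense_setOf_geometric (w z₁) (w z₂) ((f : X → ℂ) z₁) ((f : X → ℂ) z₂) <|
    ((LinearMap.prod_surjective_of_linearIndependent hindep).denseRange.dense_image hπ hf).mono ?_
  rintro _ ⟨g, ⟨c, n, hg⟩, rfl⟩
  refine ⟨c, n, ?_⟩
  simp [evalFunctional, hg, weightedComp_iterate_apply_of_isFixedPt w hfix₁,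
    weightedComp_iterate_apply_of_isFixedPt w hfix₂, mul_assoc]

/-- if `φ` has two distinct fixed points `z₁ ≠ z₂` with `δ_{z₁}, δ_{z₂}`
linearly independent on `E ⊆ C(X)`, then `W f = w·(f∘φ)` is not `τ_p`-supercyclic. -/
theorem not_taup_supercyclic_of_two_fixed_points
    (X : Type*) [TopologicalSpace X] [T2Space X]
    (E : Submodule ℂ (X → ℂ))
    (hEcont : ∀ g ∈ E, Continuous g)
    (w : X → ℂ) (φ : X → X) (hw : Continuous w) (hφ : Continuous φ)
    (hinv : ∀ g ∈ E, weightedComp w φ g ∈ E)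
    (z₁ z₂ : X) (hz : z₁ ≠ z₂) (hfix₁ : φ z₁ = z₁) (hfix₂ : φ z₂ = z₂)
    (hindep : LinearIndependent ℂ ![evalFunctional E z₁, evalFunctional E z₂]) :
    ¬ ∃ f : ↥E, Dense {g : ↥E | ∃ (c : ℂ) (n : ℕ),
      (g : X → ℂ) = c • (weightedComp w φ)^[n] (f : X → ℂ)} :=
  not_taup_supercyclic_of_two_fixed_points_general X E w φ z₁ z₂ hfix₁ hfix₂ hindep
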